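/- arXiv:1408.3364 — 4 statements merged into one kernel-verified Lean document; each statement's English description precedes it below -/
import Mathlib

section
/- Let V be a finite-dimensional complex vector space and W a complex vector space. Suppose U(x) ∈ End(V ⊗ W) depends on a parameter x and there exists an invertible R(x) ∈ End(V ⊗ V) such that R_{00'}(x/y) U_{01}(x) U_{0'1}(y) = U_{0'1}(y) U_{01}(x) R_{00'}(x/y) in End(V ⊗ V ⊗ W) for all x, y in the relevant domain. Then the transfer matrices T(x) := Tr_V U(x) (partial trace over the first factor V) commute: [T(x), T(y)] = 0 for all x, y. -/
open Matrix TensorProduct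

noncomputable section

abbrev Sq (n : ℕ) := Matrix (Fin n × Fin n) (Fin n × Fin n) ℂ

/-- Endomorphisms of `V ⊗ W` (`V = ℂⁿ` finite dimensional) encoded as `n × n` matrices with
entries in `End(W)`. -/
abbrev OpVW (n : ℕ) (W : Type*) [AddCommGroup W] [Module ℂ W] :=
  Matrix (Fin n) (Fin n) (Module.End ℂ W)

/-- Endomorphisms of `V ⊗ V ⊗ W`. -/
abbrev OpVVW (n : ℕ) (W : Type*) [AddCommGroup W] [Module ℂ W] :=
  Matrix (Fin n × Fin n) (Fin n × Fin n) (Module.End ℂ W)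

/-- Embedding a scalar operator on `V ⊗ V` as an operator on `V ⊗ V ⊗ W`. -/
def scalE {n : ℕ} (W : Type*) [AddCommGroup W] [Module ℂ W] (R : Sq n) : OpVVW n W :=
  R.map (algebraMap ℂ (Module.End ℂ W))

/-- `U₀₁`: an operator on `V₍₀₎ ⊗ W` acting trivially on the second auxiliary copy `V₍₀'₎`. -/
def u01 {n : ℕ} {W : Type*} [AddCommGroup W] [Module ℂ W] (U : OpVW n W) : OpVVW n W :=
  Matrix.of fun p q => if p.2 = q.2 then U p.1 q.1 else 0

/-- `U₀'₁`: an operator on `V₍₀'₎ ⊗ W` acting trivially on the first auxiliary copy `V₍₀₎`. -/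
def u0p1 {n : ℕ} {W : Type*} [AddCommGroup W] [Module ℂ W] (U : OpVW n W) : OpVVW n W :=
  Matrix.of fun p q => if p.1 = q.1 then U p.2 q.2 else 0

/-!
In `V ⊗ V ⊗ W` one has `Tr_{VV}(U₀₁(x) U₀'₁(y)) = T(x) T(y)` and
`Tr_{VV}(U₀'₁(y) U₀₁(x)) = T(y) T(x)`. The exchange relation says that these two operators are
conjugate by the invertible scalar operator `R(x/y)`, and the partial trace over `V ⊗ V` is
invariant under such conjugation because scalars commute with every element of `End(W)`.
-/

theorem Matrix.trace_mul_comm_of_commute {ι κ α : Type*} [Fintype ι] [Fintype κ]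
    [NonUnitalNonAssocSemiring α] (A : Matrix ι κ α) (B : Matrix κ ι α)
    (h : ∀ i j, Commute (A i j) (B j i)) : (A * B).trace = (B * A).trace := by
  simp only [trace, diag, mul_apply]
  rw [Finset.sum_comm]
  exact Finset.sum_congr rfl fun j _ => Finset.sum_congr rfl fun i _ => h i j

section Transfer

variable {n : ℕ} {W : Type*} [AddCommGroup W] [Module ℂ W]

theorem u01_mul_u0p1_apply (A B : OpVW n W) (p q : Fin n × Fin n) :
    (u01 A * u0p1 B) p q = A p.1 q.1 * B p.2 q.2 := by
  rw [mul_apply, Finset.sum_eq_single (q.1, p.2)]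
  · simp [u01, u0p1]
  · rintro ⟨i, j⟩ - hij
    simp only [u01, u0p1, of_apply]
    split_ifs <;> simp_all
  · simp

theorem u0p1_mul_u01_apply (A B : OpVW n W) (p q : Fin n × Fin n) :
    (u0p1 B * u01 A) p q = B p.2 q.2 * A p.1 q.1 := by
  rw [mul_apply, Finset.sum_eq_single (p.1, q.2)]
  · simp [u01, u0p1]
  · rintro ⟨i, j⟩ - hij
    simp only [u01, u0p1, of_apply]
    split_ifs <;> simp_all
  · simp

theorem trace_u01_mul_u0p1 (A B : OpVW n W) : (u01 A * u0p1 B).trace = A.trace * B.trace := by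
  simp only [trace, diag, u01_mul_u0p1_apply, Fintype.sum_prod_type, Finset.sum_mul_sum]

theorem trace_u0p1_mul_u01 (A B : OpVW n W) : (u0p1 B * u01 A).trace = B.trace * A.trace := by
  simp only [trace, diag, u0p1_mul_u01_apply, Fintype.sum_prod_type, Finset.sum_mul_sum]
  exact Finset.sum_comm

theorem trace_scalE_mul_comm (S : Sq n) (X : OpVVW n W) :
    (scalE W S * X).trace = (X * scalE W S).trace :=
  trace_mul_comm_of_commute _ _ fun i j => Algebra.commutes (S i j) (X j i)

theorem trace_eq_of_scalE_mul_eq_mul_scalE {R : Sq n} (hR : IsUnit R) {A B : OpVVW n W}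
    (h : scalE W R * A = B * scalE W R) : A.trace = B.trace := by
  obtain ⟨u, rfl⟩ := hR
  let v := Units.map (algebraMap ℂ (Module.End ℂ W)).mapMatrix.toMonoidHom u
  have hv : (v : OpVVW n W) = scalE W u := rfl
  have hv_inv : ((v⁻¹ : (OpVVW n W)ˣ) : OpVVW n W) = scalE W (u⁻¹ : (Sq n)ˣ) := rfl
  have hA : A = scalE W (u⁻¹ : (Sq n)ˣ) * (B * scalE W u) := by
    rw [← h, ← hv, ← hv_inv, Units.inv_mul_cancel_left]
  rw [hA, trace_scalE_mul_comm, mul_assoc, ← hv, ← hv_inv, Units.mul_inv, mul_one]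

end Transfer

/-- commuting transfer matrices in the periodic setting. -/
theorem stmt0 (n : ℕ) (W : Type*) [AddCommGroup W] [Module ℂ W]
    (U : ℂ → OpVW n W) (R : ℂ → Sq n)
    (hRinv : ∀ x : ℂ, IsUnit (R x))
    (hExch : ∀ x y : ℂ,
      scalE W (R (x / y)) * u01 (U x) * u0p1 (U y)
        = u0p1 (U y) * u01 (U x) * scalE W (R (x / y))) :
    ∀ x y : ℂ, (U x).trace * (U y).trace = (U y).trace * (U x).trace := by
  intro x y
  rw [← trace_u01_mul_u0p1, ← trace_u0p1_mul_u01]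
  exact trace_eq_of_scalE_mul_eq_mul_scalE (hRinv (x / y)) (by rw [← mul_assoc, hExch])
end
end

section
/- Let V be finite-dimensional with R(x) ∈ End(V ⊗ V) such that R(x)^{t₁} is invertible. Define R̃(x) := ((R(x)^{t₁})^{-1})^{t₁}, and for a parameter-dependent operator Y(x) ∈ End(V) define φ_R(Y)(x) := Tr₀ (Y₀(x) P_{01} R_{01}(x²)) ∈ End(V). Then φ_R is bijective on the space of such parameter-dependent operators, with inverse φ_{R̃}; that is, φ_R(φ_{R̃}(Y)) = Y and φ_{R̃}(φ_R(Y)) = Y. -/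
open Matrix Kronecker

noncomputable section

abbrev MatV (n : ℕ) := Matrix (Fin n) (Fin n) ℂ
/-- The flip operator `P` on `V ⊗ V`. -/
def flipM (n : ℕ) : Sq n := Matrix.of fun p q => if p.1 = q.2 ∧ p.2 = q.1 then (1 : ℂ) else 0

/-- `R₂₁ = P R P`. -/
def swapM {n : ℕ} (R : Sq n) : Sq n := Matrix.of fun p q => R (p.2, p.1) (q.2, q.1)

/-- Partial transpose in the first tensor factor. -/
def pt1 {n : ℕ} (R : Sq n) : Sq n := Matrix.of fun p q => R (q.1, p.2) (p.1, q.2)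

/-- `R̃ = ((R^{t₁})⁻¹)^{t₁}`. -/
def rtil {n : ℕ} (R : Sq n) : Sq n := pt1 (pt1 R)⁻¹

/-- `K ⊗ Id` acting in the first factor. -/
def k1M {n : ℕ} (K : MatV n) : Sq n := Matrix.of fun p q => if p.2 = q.2 then K p.1 q.1 else 0

/-- `Id ⊗ K` acting in the second factor. -/
def k2M {n : ℕ} (K : MatV n) : Sq n := Matrix.of fun p q => if p.1 = q.1 then K p.2 q.2 else 0

/-- Partial trace over the first tensor factor. -/
def ptr0 {n : ℕ} (X : Sq n) : MatV n := Matrix.of fun i j => ∑ a : Fin n, X (a, i) (a, j)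

/-- `φ_R(Y)(x) = Tr₀ (Y₀(x) P₀₁ R₀₁(x²))`. -/
def phiR {n : ℕ} (R : ℂ → Sq n) (K : ℂ → MatV n) : ℂ → MatV n :=
  fun x => ptr0 (k1M (K x) * flipM n * R (x ^ 2))

abbrev Cu (n : ℕ) := Matrix (Fin n × Fin n × Fin n) (Fin n × Fin n × Fin n) ℂ

def e12 {n : ℕ} (R : Sq n) : Cu n :=
  Matrix.of fun p q => if p.2.2 = q.2.2 then R (p.1, p.2.1) (q.1, q.2.1) else 0
def e13 {n : ℕ} (R : Sq n) : Cu n :=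
  Matrix.of fun p q => if p.2.1 = q.2.1 then R (p.1, p.2.2) (q.1, q.2.2) else 0
def e23 {n : ℕ} (R : Sq n) : Cu n :=
  Matrix.of fun p q => if p.1 = q.1 then R (p.2.1, p.2.2) (q.2.1, q.2.2) else 0

/-- The Yang–Baxter equation `R₁₂(x/y) R₁₃(x) R₂₃(y) = R₂₃(y) R₁₃(x) R₁₂(x/y)`. -/
def YBEprop {n : ℕ} (R : ℂ → Sq n) : Prop :=
  ∀ x y : ℂ, e12 (R (x / y)) * e13 (R x) * e23 (R y) = e23 (R y) * e13 (R x) * e12 (R (x / y))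

/-- The left reflection equation. -/
def LREprop {n : ℕ} (R : ℂ → Sq n) (K : ℂ → MatV n) : Prop :=
  ∀ x y : ℂ, R (x / y) * k1M (K x) * swapM (R (x * y)) * k2M (K y)
    = k2M (K y) * R (x * y) * k1M (K x) * swapM (R (x / y))

/-- The right reflection equation. -/
def RREprop {n : ℕ} (R : ℂ → Sq n) (K : ℂ → MatV n) : Prop :=
  ∀ x y : ℂ, swapM (R (x / y)) * k1M (K x) * R (x * y) * k2M (K y)
    = k2M (K y) * swapM (R (x * y)) * k1M (K x) * R (x / y)

/-- The dual reflection equation. -/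
def DREprop {n : ℕ} (R : ℂ → Sq n) (K : ℂ → MatV n) : Prop :=
  ∀ x y : ℂ, (R (x / y))⁻¹ * k1M (K x) * swapM (rtil (R (x * y))) * k2M (K y)
    = k2M (K y) * rtil (R (x * y)) * k1M (K x) * ((swapM (R (x / y)))⁻¹)ᵀ

/-!
Flattening `Y(x)` to a vector on `V ⊗ V`, the map `φ_R` is right multiplication of that vector
by `R(x²)^{t₁}`. Hence `φ_R ∘ φ_{R'}` is right multiplication by `R'(x²)^{t₁} R(x²)^{t₁}`, and
`R̃^{t₁} = (R^{t₁})⁻¹` because the partial transpose is an involution.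
-/

lemma pt1_rtil {n : ℕ} (R : Sq n) : pt1 (rtil R) = (pt1 R)⁻¹ := rfl

lemma uncurry_phiR {n : ℕ} (R : ℂ → Sq n) (K : ℂ → MatV n) (x : ℂ) :
    Function.uncurry (phiR R K x) = Function.uncurry (K x) ᵥ* pt1 (R (x ^ 2)) := by
  ext ⟨i, j⟩
  simp only [phiR, ptr0, k1M, flipM, pt1, Matrix.vecMul, dotProduct, Matrix.mul_apply,
    Matrix.of_apply, Fintype.sum_prod_type, ite_and, ite_mul, zero_mul, mul_one, mul_ite,
    mul_zero, Finset.sum_ite_eq', Finset.sum_ite_eq, Finset.mem_univ, if_true,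
    Finset.sum_ite_irrel, Finset.sum_const_zero]
  rfl

lemma phiR_phiR_of_pt1_mul_pt1_eq_one {n : ℕ} (R R' : ℂ → Sq n) (Y : ℂ → MatV n) (x : ℂ)
    (h : pt1 (R' (x ^ 2)) * pt1 (R (x ^ 2)) = 1) :
    phiR R (phiR R' Y) x = Y x := by
  apply Function.uncurry_injective
  rw [uncurry_phiR, uncurry_phiR, Matrix.vecMul_vecMul, h, Matrix.vecMul_one]

/-- `φ_R` is bijective with inverse `φ_{R̃}`. -/
theorem stmt3 (n : ℕ) (R : ℂ → Sq n)
    (hRt1 : ∀ x : ℂ, IsUnit (pt1 (R x))) :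
    ∀ (Y : ℂ → MatV n) (x : ℂ),
      phiR R (phiR (fun t => rtil (R t)) Y) x = Y x ∧
      phiR (fun t => rtil (R t)) (phiR R Y) x = Y x := by
  intro Y x
  have hdet : IsUnit (pt1 (R (x ^ 2))).det :=
    (Matrix.isUnit_iff_isUnit_det _).mp (hRt1 (x ^ 2))
  constructor
  · apply phiR_phiR_of_pt1_mul_pt1_eq_one
    rw [pt1_rtil, Matrix.nonsing_inv_mul _ hdet]
  · apply phiR_phiR_of_pt1_mul_pt1_eq_one
    rw [pt1_rtil, Matrix.mul_nonsing_inv _ hdet]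
end
end

section
/- Let V be finite-dimensional and let R(x) ∈ End(V ⊗ V) satisfy the Yang-Baxter equation R_{12}(x/y) R_{13}(x) R_{23}(y) = R_{23}(y) R_{13}(x) R_{12}(x/y) and the regularity condition R(1) = c·P for some nonzero constant c, where P is the flip. Then R satisfies the unitarity condition: R(x) R_{21}(1/x) is a scalar multiple of the identity on V ⊗ V, for each x where both are defined. -/
/-!
Put `x = 1` in the Yang–Baxter equation. Since `R₁₃(1) = c P₁₃` and `P₁₃ R₂₃(y) P₁₃ = (R₂₁(y))₁₂`,
it becomes `(R(1/y) R₂₁(y))₁₂ = P₁₃ (R₂₁(y) R(1/y))₁₂ P₁₃`. The left side acts trivially on the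
third factor and the right side on the first, so `R(1/y) R₂₁(y) = R₂₁(y) R(1/y) = 1 ⊗ Z_y`.
At `y = 1/x` this says `R(x) R₂₁(1/x) = 1 ⊗ Z`; at `y = x`, conjugated by `P`, it says
`R(x) R₂₁(1/x) = W ⊗ 1`. An operator of both forms is a scalar.
-/

open Matrix Kronecker

noncomputable section

theorem Matrix.exists_one_kronecker_eq_smul_one_of_eq_kronecker_one {ι κ α : Type*}
    [Fintype ι] [DecidableEq ι] [Fintype κ] [DecidableEq κ] [CommSemiring α]
    {Z : Matrix κ κ α} {W : Matrix ι ι α} (h : (1 : Matrix ι ι α) ⊗ₖ Z = W ⊗ₖ 1) :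
    ∃ m : α, (1 : Matrix ι ι α) ⊗ₖ Z = m • 1 := by
  cases isEmpty_or_nonempty ι with
  | inl _ => exact ⟨0, Subsingleton.elim _ _⟩
  | inr hι =>
    obtain ⟨i⟩ := hι
    have hZ : Z = W i i • 1 := by
      ext j l
      simpa [kronecker_apply] using congrFun (congrFun h (i, j)) (i, l)
    exact ⟨W i i, by rw [hZ, kronecker_smul, one_kronecker_one]⟩

section Tensor

variable {n : ℕ}

theorem swapM_eq_submatrix (A : Sq n) : swapM A = A.submatrix Prod.swap Prod.swap := rfl

theorem swapM_mul (A B : Sq n) : swapM (A * B) = swapM A * swapM B := by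
  simp only [swapM_eq_submatrix]
  exact (submatrix_mul_equiv A B
    (Equiv.prodComm _ _) (Equiv.prodComm _ _) (Equiv.prodComm _ _)).symm

theorem swapM_swapM (A : Sq n) : swapM (swapM A) = A := rfl

theorem swapM_one_kronecker (Z : MatV n) : swapM (1 ⊗ₖ Z) = Z ⊗ₖ 1 := by
  ext p q
  simp [swapM, mul_comm]

theorem e12_eq_submatrix (A : Sq n) :
    e12 A = (A ⊗ₖ (1 : MatV n)).submatrix
      (Equiv.prodAssoc _ _ _).symm (Equiv.prodAssoc _ _ _).symm := by
  ext p q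
  simp [e12, one_apply]

theorem e12_mul (A B : Sq n) : e12 (A * B) = e12 A * e12 B := by
  simp only [e12_eq_submatrix, submatrix_mul_equiv, ← mul_kronecker_mul, mul_one]

theorem e13_smul (c : ℂ) (A : Sq n) : e13 (c • A) = c • e13 A := by
  ext p q
  simp [e13]

def swap13 (p : Fin n × Fin n × Fin n) : Fin n × Fin n × Fin n := (p.2.2, p.2.1, p.1)

theorem mul_e13_flipM (X : Cu n) : X * e13 (flipM n) = X.submatrix id swap13 := by
  ext p q
  simp [mul_apply, e13, flipM, swap13, Fintype.sum_prod_type, ite_and]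

theorem e13_flipM_mul (X : Cu n) : e13 (flipM n) * X = X.submatrix swap13 id := by
  ext p q
  simp [mul_apply, e13, flipM, swap13, Fintype.sum_prod_type, ite_and]

theorem e13_flipM_mul_e23 (B : Sq n) :
    e13 (flipM n) * e23 B = e12 (swapM B) * e13 (flipM n) := by
  rw [e13_flipM_mul, mul_e13_flipM]
  rfl

theorem e23_mul_e13_flipM (B : Sq n) :
    e23 B * e13 (flipM n) = e13 (flipM n) * e12 (swapM B) := by
  rw [e13_flipM_mul, mul_e13_flipM]
  rfl

theorem exists_one_kronecker_of_e12_mul_e13_flipM {X Y : Sq n}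
    (h : e12 X * e13 (flipM n) = e13 (flipM n) * e12 Y) :
    ∃ Z : MatV n, X = 1 ⊗ₖ Z ∧ Y = 1 ⊗ₖ Z := by
  cases isEmpty_or_nonempty (Fin n) with
  | inl _ => exact ⟨0, Subsingleton.elim _ _, Subsingleton.elim _ _⟩
  | inr hn =>
    obtain ⟨a⟩ := hn
    rw [mul_e13_flipM, e13_flipM_mul] at h
    have hX : ∀ i j k l, X (i, j) (k, l) = if i = k then Y (a, j) (a, l) else 0 :=
      fun i j k l => by simpa [e12, swap13] using congrFun (congrFun h (i, j, a)) (a, l, k)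
    have hY : ∀ i j k l, Y (i, j) (k, l) = if i = k then X (a, j) (a, l) else 0 :=
      fun i j k l => by simpa [e12, swap13] using (congrFun (congrFun h (a, j, i)) (k, l, a)).symm
    refine ⟨Matrix.of fun j l => Y (a, j) (a, l), ?_, ?_⟩
    · ext ⟨i, j⟩ ⟨k, l⟩
      simp [hX, one_apply, ite_mul]
    · ext ⟨i, j⟩ ⟨k, l⟩
      rw [hY, hX]
      simp [one_apply, ite_mul]

theorem YBEprop.exists_one_kronecker {R : ℂ → Sq n} (hYBE : YBEprop R)
    {c : ℂ} (hc : c ≠ 0) (hreg : R 1 = c • flipM n) (y : ℂ) :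
    ∃ Z : MatV n, R y⁻¹ * swapM (R y) = 1 ⊗ₖ Z ∧ swapM (R y) * R y⁻¹ = 1 ⊗ₖ Z := by
  apply exists_one_kronecker_of_e12_mul_e13_flipM
  have h := hYBE 1 y
  rw [one_div, hreg, e13_smul, mul_smul_comm, smul_mul_assoc, mul_smul_comm, smul_mul_assoc] at h
  calc e12 (R y⁻¹ * swapM (R y)) * e13 (flipM n)
      = e12 (R y⁻¹) * (e13 (flipM n) * e23 (R y)) := by
        rw [e12_mul, mul_assoc, e13_flipM_mul_e23]
    _ = e23 (R y) * e13 (flipM n) * e12 (R y⁻¹) := by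
        rw [← mul_assoc]
        exact smul_right_injective _ hc h
    _ = e13 (flipM n) * e12 (swapM (R y) * R y⁻¹) := by
        rw [e23_mul_e13_flipM, mul_assoc, e12_mul]

end Tensor

/-- YBE together with regularity `R(1) ∝ P` implies unitarity:
`R(x) R₂₁(1/x)` is a scalar multiple of the identity. -/
theorem stmt6 (n : ℕ) (R : ℂ → Sq n)
    (hYBE : YBEprop R)
    (hreg : ∃ c : ℂ, c ≠ 0 ∧ R 1 = c • flipM n) :
    ∀ x : ℂ, ∃ m : ℂ, R x * swapM (R x⁻¹) = m • (1 : Sq n) := by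
  obtain ⟨c, hc, hR1⟩ := hreg
  intro x
  obtain ⟨Z, hZ, -⟩ := hYBE.exists_one_kronecker hc hR1 x⁻¹
  obtain ⟨W, -, hW⟩ := hYBE.exists_one_kronecker hc hR1 x
  rw [inv_inv] at hZ
  have hZW : (1 : MatV n) ⊗ₖ Z = W ⊗ₖ 1 := by
    rw [← hZ, ← swapM_one_kronecker, ← hW, swapM_mul, swapM_swapM]
  obtain ⟨m, hm⟩ := exists_one_kronecker_eq_smul_one_of_eq_kronecker_one hZW
  exact ⟨m, hZ.trans hm⟩
end
end

section
/- Let V be finite-dimensional, R(x) ∈ End(V ⊗ V) invertible satisfying the Yang-Baxter equation, unitarity R(x) R_{21}(1/x) ∝ Id, and regularity R(1) ∝ P. Let D ∈ GL(V) with [R(x), D ⊗ D] = 0. Fix z = (z₁,...,z_N) ∈ (ℂ^×)^N. Define the inhomogeneous transfer matrix T(x; z) := Tr₀ (D₀ R_{0N}(x/z_N) ⋯ R_{01}(x/z₁)) ∈ End(V^{⊗N}) and the scattering matrix A_i(z) := R_{i,i-1}(z_i/z_{i-1}) ⋯ R_{i1}(z_i/z₁) · D_i · R_{Ni}(z_N/z_i)^{-1}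 ⋯ R_{i+1,i}(z_{i+1}/z_i)^{-1}. Then T(z_i; z) is proportional to A_i(z) for each i = 1, ..., N (for generic z). -/
/-!
At `x = z_i` the factor `R_{0i}(1)` of the transfer matrix is a multiple of the flip `P_{0i}`.
Conjugation by `P_{0i}` relabels the site `0` as `i`, so moving `P_{0i}` to the left through
`D_0 R_{0N} ⋯ R_{0,i+1}` turns these into `D_i R_{iN} ⋯ R_{i,i+1}`. The factors `R_{0j}`,
`j < i`, act on sites disjoint from those, commute past them, and become `R_{ij}` when `P_{0i}`
passes them. What is left under the trace is `Tr₀ P_{0i} = Id`, and unitarity turns each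
`R_{ik}(z_i/z_k)` into a nonzero multiple of `R_{ki}(z_k/z_i)⁻¹`.
-/

open Matrix Kronecker

noncomputable section

abbrev StM (n N : ℕ) := Matrix (Fin N → Fin n) (Fin N → Fin n) ℂ
abbrev BigM (n N : ℕ) := Matrix (Fin n × (Fin N → Fin n)) (Fin n × (Fin N → Fin n)) ℂ

/-- `K` acting in the auxiliary factor `0`. -/
def aux0 {n N : ℕ} (K : MatV n) : BigM n N :=
  Matrix.of fun p q => if p.2 = q.2 then K p.1 q.1 else 0

/-- A two-site operator acting in the auxiliary factor `0` and site `j`. -/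
def aux0J {n N : ℕ} (j : Fin N) (R : Sq n) : BigM n N :=
  Matrix.of fun p q =>
    if ∀ l, l ≠ j → p.2 l = q.2 l then R (p.1, p.2 j) (q.1, q.2 j) else 0

/-- `K` acting at site `j` of the state space `V^{⊗N}`. -/
def siteK {n N : ℕ} (j : Fin N) (K : MatV n) : StM n N :=
  Matrix.of fun p q => if ∀ l, l ≠ j → p l = q l then K (p j) (q j) else 0

/-- A two-site operator acting at sites `j` and `k` of `V^{⊗N}`. -/
def siteJK {n N : ℕ} (j k : Fin N) (R : Sq n) : StM n N :=
  Matrix.of fun p q =>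
    if ∀ l, l ≠ j → l ≠ k → p l = q l then R (p j, p k) (q j, q k) else 0

/-- Partial trace over the auxiliary factor. -/
def ptrA {n N : ℕ} (X : BigM n N) : StM n N :=
  Matrix.of fun p q => ∑ a : Fin n, X (a, p) (a, q)

/-- Descending ordered product `f(k-1) * ⋯ * f(0)`. -/
def pdesc {M : Type*} [Monoid M] {k : ℕ} (f : Fin k → M) : M := ((List.ofFn f).reverse).prod

/-- Ascending ordered product `f(0) * ⋯ * f(k-1)`. -/
def pasc {M : Type*} [Monoid M] {k : ℕ} (f : Fin k → M) : M := (List.ofFn f).prod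

/-- Inhomogeneous transfer matrix `T(x;z) = Tr₀ (D₀ R₀N(x/z_N) ⋯ R₀₁(x/z₁))`. -/
def Tper {n N : ℕ} (R : ℂ → Sq n) (D : MatV n) (z : Fin N → ℂ) (x : ℂ) : StM n N :=
  ptrA (aux0 D * pdesc fun i => aux0J i (R (x / z i)))

/-- qKZ transport matrix at `p = 1` (scattering matrix)
`A_i(z) = R_{i,i-1}(z_i/z_{i-1}) ⋯ R_{i1}(z_i/z₁) D_i R_{Ni}(z_N/z_i)⁻¹ ⋯ R_{i+1,i}(z_{i+1}/z_i)⁻¹`. -/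
def Aper {n N : ℕ} (R : ℂ → Sq n) (D : MatV n) (z : Fin N → ℂ) (i : Fin N) : StM n N :=
  pdesc (fun j : Fin i.1 =>
      siteJK i ⟨j.1, j.isLt.trans i.isLt⟩ (R (z i / z ⟨j.1, j.isLt.trans i.isLt⟩)))
  * siteK i D
  * pdesc (fun k : Fin (N - (i.1 + 1)) =>
      (siteJK ⟨i.1 + 1 + k.1, by have := k.isLt; omega⟩ i
        (R (z ⟨i.1 + 1 + k.1, by have := k.isLt; omega⟩ / z i)))⁻¹)

section OrderedProduct

variable {M : Type*} [Monoid M]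

lemma pdesc_split {N : ℕ} (f : Fin N → M) (i : Fin N) :
    pdesc f = pdesc (fun k : Fin (N - (i.1 + 1)) => f ⟨i.1 + 1 + k.1, by omega⟩)
      * f i * pdesc (fun j : Fin i.1 => f ⟨j.1, j.isLt.trans i.isLt⟩) := by
  have hsplit : List.ofFn f = List.ofFn (fun j : Fin i.1 => f ⟨j.1, j.isLt.trans i.isLt⟩)
      ++ f i :: List.ofFn (fun k : Fin (N - (i.1 + 1)) => f ⟨i.1 + 1 + k.1, by omega⟩) := by
    apply List.ext_getElem
    · simp only [List.length_ofFn, List.length_append, List.length_cons]; omega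
    · intro k h₁ h₂
      simp only [List.getElem_ofFn, List.getElem_append, List.getElem_cons, List.length_ofFn]
      split_ifs <;> congr 1 <;> ext <;> simp <;> omega
  simp [pdesc, hsplit, mul_assoc]

lemma map_pdesc {M' F : Type*} [Monoid M'] [FunLike F M M'] [MonoidHomClass F M M']
    (φ : F) {k : ℕ} (f : Fin k → M) : φ (pdesc f) = pdesc (fun m => φ (f m)) := by
  simp [pdesc, map_list_prod, List.map_reverse, List.map_ofFn, Function.comp_def]

lemma commute_pdesc {x : M} {k : ℕ} {f : Fin k → M} (h : ∀ m, Commute x (f m)) :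
    Commute x (pdesc f) :=
  Commute.list_prod_right _ _ fun y hy => by
    obtain ⟨m, rfl⟩ := List.mem_ofFn.mp (List.mem_reverse.mp hy)
    exact h m

lemma pdesc_commute_pdesc {k k' : ℕ} {f : Fin k → M} {g : Fin k' → M}
    (h : ∀ a b, Commute (f a) (g b)) : Commute (pdesc f) (pdesc g) :=
  commute_pdesc fun b => (commute_pdesc fun a => (h a b).symm).symm

lemma conj_pdesc {P : M} (hP : P * P = 1) {k : ℕ} (f : Fin k → M) :
    P * pdesc f * P = pdesc (fun m => P * f m * P) :=
  map_pdesc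
    ({ toFun := fun x => P * x * P
       map_one' := by rw [mul_one, hP]
       map_mul' := fun x y => by
         simp only [mul_assoc]; rw [← mul_assoc P P, hP, one_mul] } : M →* M) f

lemma pdesc_smul {S : Type*} [CommMonoid S] [MulAction S M] [IsScalarTower S M M]
    [SMulCommClass S M M] {k : ℕ} (c : Fin k → S) (f : Fin k → M) :
    pdesc (fun m => c m • f m) = (∏ m, c m) • pdesc f := by
  induction k with
  | zero => simp [pdesc]
  | succ k ih =>
    simp only [pdesc, List.ofFn_succ, List.reverse_cons, List.prod_append, List.prod_singleton,
      Fin.prod_univ_succ] at ih ⊢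
    rw [ih, smul_mul_smul_comm, mul_comm]

end OrderedProduct

abbrev SiteOp (ι : Type*) (n : ℕ) := Matrix (ι → Fin n) (ι → Fin n) ℂ

section Locality

variable {n : ℕ} {ι : Type*} [DecidableEq ι] [Fintype ι]

def IsLocal (S : Finset ι) (A : SiteOp ι n) : Prop :=
  ∃ a : (S → Fin n) → (S → Fin n) → ℂ, ∀ p q,
    A p q = if ∀ l ∉ S, p l = q l then a (S.restrict p) (S.restrict q) else 0

lemma IsLocal.mul_apply {S T : Finset ι} (hST : Disjoint S T) {A B : SiteOp ι n}
    {a : (S → Fin n) → (S → Fin n) → ℂ} {b : (T → Fin n) → (T → Fin n) → ℂ}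
    (hA : ∀ p q, A p q = if ∀ l ∉ S, p l = q l then a (S.restrict p) (S.restrict q) else 0)
    (hB : ∀ p q, B p q = if ∀ l ∉ T, p l = q l then b (T.restrict p) (T.restrict q) else 0)
    (p q : ι → Fin n) :
    (A * B) p q = if ∀ l ∉ S, l ∉ T → p l = q l
      then a (S.restrict p) (S.restrict q) * b (T.restrict p) (T.restrict q) else 0 := by
  -- the only intermediate state that contributes agrees with `q` on `S` and with `p` elsewhere
  set r₀ : ι → Fin n := fun l => if l ∈ S then q l else p l
  rw [Matrix.mul_apply, Finset.sum_eq_single r₀]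
  · have hr₀S : S.restrict r₀ = S.restrict q := by
      ext ⟨l, hl⟩; simp [r₀, hl]
    have hr₀T : T.restrict r₀ = T.restrict p := by
      ext ⟨l, hl⟩; simp [r₀, Finset.disjoint_right.mp hST hl]
    have hcond : (∀ l ∉ T, r₀ l = q l) ↔ ∀ l ∉ S, l ∉ T → p l = q l := by
      refine ⟨fun h l hS hT => by simpa [r₀, hS] using h l hT, fun h l hT => ?_⟩
      by_cases hS : l ∈ S <;> simp [r₀, hS, h l _ hT]
    rw [hA, hB, if_pos (fun l hl => by simp [r₀, hl]), hr₀S, hr₀T]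
    by_cases h : ∀ l ∉ S, l ∉ T → p l = q l
    · rw [if_pos (hcond.mpr h), if_pos h]
    · rw [if_neg (mt hcond.mp h), if_neg h, mul_zero]
  · intro r _ hr
    rw [hA, hB]
    split_ifs with hpr hrq
    · refine absurd (funext fun l => ?_) hr
      by_cases hS : l ∈ S
      · simpa [r₀, hS] using hrq l (Finset.disjoint_left.mp hST hS)
      · simpa [r₀, hS] using (hpr l hS).symm
    all_goals simp
  · simp

lemma IsLocal.commute {S T : Finset ι} {A B : SiteOp ι n}
    (hA : IsLocal S A) (hB : IsLocal T B) (hST : Disjoint S T) : Commute A B := by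
  obtain ⟨a, ha⟩ := hA
  obtain ⟨b, hb⟩ := hB
  ext p q
  rw [IsLocal.mul_apply hST ha hb, IsLocal.mul_apply hST.symm hb ha]
  exact if_congr ⟨fun h l hT hS => h l hS hT, fun h l hS hT => h l hT hS⟩ (mul_comm _ _) rfl

end Locality

section SiteOperators

variable {n : ℕ} {ι : Type*} [DecidableEq ι] [Fintype ι]

def onSites (s t : ι) (R : Sq n) : SiteOp ι n :=
  Matrix.of fun p q =>
    if ∀ l, l ≠ s → l ≠ t → p l = q l then R (p s, p t) (q s, q t) else 0

def onSite (s : ι) (K : MatV n) : SiteOp ι n :=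
  Matrix.of fun p q => if ∀ l, l ≠ s → p l = q l then K (p s) (q s) else 0

lemma isLocal_onSites (s t : ι) (R : Sq n) : IsLocal {s, t} (onSites s t R) :=
  ⟨fun x y => R (x ⟨s, by simp⟩, x ⟨t, by simp⟩) (y ⟨s, by simp⟩, y ⟨t, by simp⟩),
    fun p q => by simp [onSites]⟩

lemma isLocal_onSite (s : ι) (K : MatV n) : IsLocal {s} (onSite s K) :=
  ⟨fun x y => K (x ⟨s, by simp⟩) (y ⟨s, by simp⟩), fun p q => by simp [onSite]⟩

lemma onSites_submatrix (σ : Equiv.Perm ι) (s t : ι) (R : Sq n) :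
    (onSites s t R).submatrix (· ∘ σ) (· ∘ σ) = onSites (σ s) (σ t) R := by
  ext p q
  simp only [onSites, Matrix.submatrix_apply, Matrix.of_apply, Function.comp_apply]
  refine if_congr ?_ rfl rfl
  rw [σ.forall_congr_left]
  simp [Equiv.symm_apply_eq]

lemma onSite_submatrix (σ : Equiv.Perm ι) (s : ι) (K : MatV n) :
    (onSite s K).submatrix (· ∘ σ) (· ∘ σ) = onSite (σ s) K := by
  ext p q
  simp only [onSite, Matrix.submatrix_apply, Matrix.of_apply, Function.comp_apply]
  refine if_congr ?_ rfl rfl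
  rw [σ.forall_congr_left]
  simp [Equiv.symm_apply_eq]

lemma siteJK_eq_onSites {N : ℕ} (j k : Fin N) (R : Sq n) : siteJK j k R = onSites j k R := by
  ext p q
  simp [siteJK, onSites]

end SiteOperators

section Flip

lemma comp_swap_eq_iff {ι α : Type*} [DecidableEq ι] {s t : ι} {p q : ι → α} :
    q = p ∘ Equiv.swap s t ↔ p = q ∘ Equiv.swap s t := by
  constructor <;> rintro rfl <;> ext <;> simp

variable {n : ℕ} {ι : Type*} [DecidableEq ι] [Fintype ι]

lemma onSites_flipM_apply (s t : ι) (p q : ι → Fin n) :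
    onSites s t (flipM n) p q = if q = p ∘ Equiv.swap s t then 1 else 0 := by
  have key : q = p ∘ Equiv.swap s t ↔
      (∀ l, l ≠ s → l ≠ t → p l = q l) ∧ p s = q t ∧ p t = q s := by
    rw [funext_iff]
    refine ⟨fun h => ⟨fun l hs ht => ?_, ?_, ?_⟩, fun ⟨h, hs, ht⟩ l => ?_⟩
    · simp [h, Equiv.swap_apply_of_ne_of_ne hs ht]
    · simp [h]
    · simp [h]
    · rw [Function.comp_apply, Equiv.swap_apply_def]
      split_ifs with hls hlt
      · rw [hls, ht]
      · rw [hlt, hs]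
      · exact (h l hls hlt).symm
  simp only [onSites, flipM, Matrix.of_apply, key]
  split_ifs <;> tauto

lemma onSites_flipM_mul_apply (s t : ι) (X : SiteOp ι n) (p q : ι → Fin n) :
    (onSites s t (flipM n) * X) p q = X (p ∘ Equiv.swap s t) q := by
  simp [Matrix.mul_apply, onSites_flipM_apply]

lemma mul_onSites_flipM_apply (s t : ι) (X : SiteOp ι n) (p q : ι → Fin n) :
    (X * onSites s t (flipM n)) p q = X p (q ∘ Equiv.swap s t) := by
  rw [Matrix.mul_apply, Finset.sum_eq_single (q ∘ Equiv.swap s t)]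
  · rw [onSites_flipM_apply, if_pos (comp_swap_eq_iff.mpr rfl), mul_one]
  · intro r _ hr
    rw [onSites_flipM_apply, if_neg (mt comp_swap_eq_iff.mp hr), mul_zero]
  · simp

lemma onSites_flipM_mul_self (s t : ι) :
    onSites s t (flipM n) * onSites s t (flipM n) = (1 : SiteOp ι n) := by
  ext p q
  have hswap : p ∘ Equiv.swap s t ∘ Equiv.swap s t = p := by ext; simp
  simp [onSites_flipM_mul_apply, onSites_flipM_apply, Matrix.one_apply, Function.comp_assoc,
    hswap, eq_comm]

lemma onSites_flipM_conj (s t : ι) (X : SiteOp ι n) :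
    onSites s t (flipM n) * X * onSites s t (flipM n)
      = X.submatrix (· ∘ Equiv.swap s t) (· ∘ Equiv.swap s t) := by
  ext p q
  rw [mul_onSites_flipM_apply, onSites_flipM_mul_apply, Matrix.submatrix_apply]

end Flip

section PairAlgebra

variable {n : ℕ} {ι : Type*} [DecidableEq ι] [Fintype ι] {s t : ι}

def pairSplit (hst : s ≠ t) :
    (ι → Fin n) ≃ (Fin n × Fin n) × ({l // l ≠ s ∧ l ≠ t} → Fin n) where
  toFun p := ((p s, p t), fun l => p l)
  invFun x l := if hs : l = s then x.1.1 else if ht : l = t then x.1.2 else x.2 ⟨l, hs, ht⟩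
  left_inv p := by
    ext l
    by_cases hs : l = s
    · simp [hs]
    · by_cases ht : l = t <;> simp [hs, ht, hst.symm]
  right_inv x := by
    ext ⟨l, hs, ht⟩ <;> simp [hst.symm, *]

lemma onSites_eq_submatrix_kronecker (hst : s ≠ t) (R : Sq n) :
    onSites s t R = (R ⊗ₖ (1 : SiteOp {l // l ≠ s ∧ l ≠ t} n)).submatrix
      (pairSplit hst) (pairSplit hst) := by
  ext p q
  simp [onSites, pairSplit, Matrix.one_apply, funext_iff, and_imp, mul_comm]

lemma onSites_mul (hst : s ≠ t) (R R' : Sq n) :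
    onSites s t R * onSites s t R' = onSites s t (R * R') := by
  simp only [onSites_eq_submatrix_kronecker hst, Matrix.submatrix_mul_equiv,
    ← Matrix.mul_kronecker_mul, mul_one]

lemma onSites_one (hst : s ≠ t) : onSites s t (1 : Sq n) = 1 := by
  rw [onSites_eq_submatrix_kronecker hst, Matrix.one_kronecker_one, Matrix.submatrix_one_equiv]

lemma onSites_smul (c : ℂ) (R : Sq n) : onSites s t (c • R) = c • onSites s t R := by
  ext p q
  simp only [onSites, Matrix.of_apply, Matrix.smul_apply]
  split_ifs <;> simp

lemma onSites_swapM (R : Sq n) : onSites s t (swapM R) = onSites t s R := by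
  ext p q
  simp only [onSites, swapM, Matrix.of_apply]
  exact if_congr ⟨fun h l ht hs => h l hs ht, fun h l hs ht => h l ht hs⟩ rfl rfl

end PairAlgebra

section AuxiliarySite

variable {n N : ℕ}

/-- The auxiliary factor `0` is the site `none` of `Option (Fin N)`. -/
def auxEquiv :
    SiteOp (Option (Fin N)) n ≃ₐ[ℂ] BigM n N :=
  Matrix.reindexAlgEquiv ℂ ℂ Equiv.piOptionEquivProd

lemma auxEquiv_onSites_none (j : Fin N) (R : Sq n) :
    auxEquiv (onSites none (some j) R) = aux0J j R := by
  ext ⟨a, p⟩ ⟨b, q⟩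
  simp [auxEquiv, onSites, aux0J, Option.forall]

lemma auxEquiv_onSite_none (K : MatV n) : auxEquiv (onSite none K) = aux0 (N := N) K := by
  ext ⟨a, p⟩ ⟨b, q⟩
  simp [auxEquiv, onSite, aux0, Option.forall, funext_iff]

lemma auxEquiv_onSites_some (i j : Fin N) (R : Sq n) :
    auxEquiv (onSites (some i) (some j) R) = 1 ⊗ₖ siteJK i j R := by
  ext ⟨a, p⟩ ⟨b, q⟩
  by_cases hab : a = b <;> simp [auxEquiv, onSites, siteJK, Option.forall, hab]

lemma auxEquiv_onSite_some (i : Fin N) (K : MatV n) :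
    auxEquiv (onSite (some i) K) = 1 ⊗ₖ siteK i K := by
  ext ⟨a, p⟩ ⟨b, q⟩
  by_cases hab : a = b <;> simp [auxEquiv, onSite, siteK, Option.forall, hab]

lemma ptrA_smul (c : ℂ) (X : BigM n N) : ptrA (c • X) = c • ptrA X := by
  ext p q
  simp [ptrA, Finset.mul_sum]

lemma ptrA_mul_one_kronecker (X : BigM n N) (S : StM n N) :
    ptrA (X * (1 ⊗ₖ S)) = ptrA X * S := by
  ext p q
  simpa [ptrA, Matrix.mul_apply, Fintype.sum_prod_type, Matrix.one_apply, Finset.sum_mul]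
    using Finset.sum_comm

lemma ptrA_one_kronecker_mul (S : StM n N) (X : BigM n N) :
    ptrA ((1 ⊗ₖ S) * X) = S * ptrA X := by
  ext p q
  simpa [ptrA, Matrix.mul_apply, Fintype.sum_prod_type, Matrix.one_apply, Finset.mul_sum]
    using Finset.sum_comm

lemma ptrA_aux0J_flipM (i : Fin N) : ptrA (aux0J i (flipM n)) = 1 := by
  ext p q
  by_cases hpq : p = q
  · subst hpq
    simp [ptrA, aux0J, flipM, Finset.filter_eq', Finset.filter_and]
  · have hoff : (∀ l, l ≠ i → p l = q l) → p i ≠ q i := fun h hi =>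
      hpq (funext fun l => if hl : l = i then hl ▸ hi else h l hl)
    simpa [ptrA, aux0J, flipM, hpq] using hoff

end AuxiliarySite

section Contraction

variable {n : ℕ} {ι : Type*} [DecidableEq ι] [Fintype ι]

lemma onSite_mul_pdesc_mul_flipM_mul_pdesc {o i : ι} (hoi : o ≠ i) {ku kl : ℕ}
    {gu : Fin ku → ι} {gl : Fin kl → ι} (hgu : ∀ m, gu m ≠ o ∧ gu m ≠ i)
    (hgl : ∀ m, gl m ≠ o ∧ gl m ≠ i) (hgugl : ∀ a b, gu a ≠ gl b)
    (D : MatV n) (Qu : Fin ku → Sq n) (Ql : Fin kl → Sq n) :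
    onSite o D * (pdesc (fun m => onSites o (gu m) (Qu m)) * onSites o i (flipM n)
        * pdesc (fun m => onSites o (gl m) (Ql m)))
      = pdesc (fun m => onSites i (gl m) (Ql m)) * onSites o i (flipM n)
        * (onSite i D * pdesc (fun m => onSites i (gu m) (Qu m))) := by
  set P : SiteOp ι n := onSites o i (flipM n)
  set L₀ := pdesc (fun m => onSites o (gl m) (Ql m))
  set Uᵢ := pdesc (fun m => onSites i (gu m) (Qu m))
  have hP : P * P = 1 := onSites_flipM_mul_self o i
  have hD : P * onSite o D * P = onSite i D := by
    rw [onSites_flipM_conj, onSite_submatrix, Equiv.swap_apply_left]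
  have hconj : ∀ {k} (g : Fin k → ι), (∀ m, g m ≠ o ∧ g m ≠ i) →
      ∀ Q : Fin k → Sq n,
      P * pdesc (fun m => onSites o (g m) (Q m)) * P = pdesc (fun m => onSites i (g m) (Q m)) := by
    intro k g hg Q
    rw [conj_pdesc hP]
    congr 1
    funext m
    rw [onSites_flipM_conj, onSites_submatrix, Equiv.swap_apply_left,
      Equiv.swap_apply_of_ne_of_ne (hg m).1 (hg m).2]
  have hDL : Commute (onSite i D) L₀ := commute_pdesc fun m =>
    (isLocal_onSite i D).commute (isLocal_onSites o (gl m) (Ql m))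
      (by simp [hoi.symm, (hgl m).2.symm])
  have hUL : Commute Uᵢ L₀ := pdesc_commute_pdesc fun a b =>
    (isLocal_onSites i (gu a) (Qu a)).commute (isLocal_onSites o (gl b) (Ql b))
      (by simp [hoi, (hgu a).1.symm, (hgl b).2, (hgugl a b).symm])
  calc onSite o D * (pdesc (fun m => onSites o (gu m) (Qu m)) * P * L₀)
      = P * (P * onSite o D * P) * (P * pdesc (fun m => onSites o (gu m) (Qu m)) * P) * L₀ := by
        simp only [mul_assoc]
        rw [← mul_assoc P P, hP, one_mul, ← mul_assoc P P, hP, one_mul]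
    _ = P * (onSite i D * Uᵢ * L₀) := by
        rw [hD, hconj gu hgu]
        simp only [mul_assoc]
        rfl
    _ = P * (L₀ * (onSite i D * Uᵢ)) := by
        rw [mul_assoc (onSite i D), hUL.eq, ← mul_assoc (onSite i D), hDL.eq, mul_assoc]
    _ = (P * L₀ * P) * P * (onSite i D * Uᵢ) := by
        rw [mul_assoc (P * L₀), hP, mul_one, mul_assoc]
    _ = _ := by rw [hconj gl hgl]

end Contraction

section TransferMatrix

variable {n N : ℕ}

lemma one_kronecker_pdesc {m m' : Type*} [Fintype m] [DecidableEq m] [Fintype m']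
    [DecidableEq m'] {k : ℕ} (f : Fin k → Matrix m' m' ℂ) :
    (1 : Matrix m m ℂ) ⊗ₖ pdesc f = pdesc (fun j => (1 : Matrix m m ℂ) ⊗ₖ f j) :=
  map_pdesc ({ toFun := fun A => (1 : Matrix m m ℂ) ⊗ₖ A
               map_one' := Matrix.one_kronecker_one
               map_mul' := fun A B => by rw [← Matrix.mul_kronecker_mul, one_mul] } :
    Matrix m' m' ℂ →* Matrix (m × m') (m × m') ℂ) f

lemma aux0J_smul (j : Fin N) (c : ℂ) (R : Sq n) : aux0J j (c • R) = c • aux0J j R := by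
  rw [← auxEquiv_onSites_none, onSites_smul, map_smul, auxEquiv_onSites_none]

lemma Tper_inhomogeneity_eq_smul {R : ℂ → Sq n} {c : ℂ} (hR1 : R 1 = c • flipM n)
    (D : MatV n) {z : Fin N → ℂ} {i : Fin N} (hzi : z i ≠ 0) :
    Tper R D z (z i) = c •
      (pdesc (fun j : Fin i.1 => siteJK i ⟨j.1, j.isLt.trans i.isLt⟩
          (R (z i / z ⟨j.1, j.isLt.trans i.isLt⟩)))
        * siteK i D
        * pdesc (fun k : Fin (N - (i.1 + 1)) => siteJK i ⟨i.1 + 1 + k.1, by omega⟩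
          (R (z i / z ⟨i.1 + 1 + k.1, by omega⟩)))) := by
  have key := congrArg (ptrA ∘ auxEquiv) <| onSite_mul_pdesc_mul_flipM_mul_pdesc
    (o := none) (i := some i) (Option.some_ne_none i).symm
    (gu := fun k : Fin (N - (i.1 + 1)) => some ⟨i.1 + 1 + k.1, by omega⟩)
    (gl := fun j : Fin i.1 => some ⟨j.1, j.isLt.trans i.isLt⟩)
    (fun k => ⟨Option.some_ne_none _,
      by simp only [ne_eq, Option.some_inj, Fin.ext_iff]; omega⟩)
    (fun j => ⟨Option.some_ne_none _,
      by simp only [ne_eq, Option.some_inj, Fin.ext_iff]; omega⟩)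
    (fun k j => by simp only [ne_eq, Option.some_inj, Fin.ext_iff]; omega)
    D (fun k => R (z i / z ⟨i.1 + 1 + k.1, by omega⟩))
    (fun j => R (z i / z ⟨j.1, j.isLt.trans i.isLt⟩))
  simp only [Function.comp_apply, map_mul, map_pdesc, auxEquiv_onSites_none,
    auxEquiv_onSite_none, auxEquiv_onSites_some, auxEquiv_onSite_some,
    ← one_kronecker_pdesc] at key
  rw [← Matrix.mul_kronecker_mul, one_mul, ptrA_mul_one_kronecker, ptrA_one_kronecker_mul,
    ptrA_aux0J_flipM, mul_one] at key
  rw [Tper, pdesc_split _ i, div_self hzi, hR1, aux0J_smul, mul_smul_comm, smul_mul_assoc,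
    mul_smul_comm, ptrA_smul, key, mul_assoc]

end TransferMatrix

section Unitarity

variable {n : ℕ} {ι : Type*} [DecidableEq ι] [Fintype ι]

lemma onSites_eq_smul_inv {s t : ι} (hst : s ≠ t) {A B : Sq n} {c : ℂ} (hc : c ≠ 0)
    (h : A * swapM B = c • 1) : onSites s t A = c • (onSites t s B)⁻¹ := by
  have hprod : onSites s t A * onSites t s B = c • 1 := by
    rw [← onSites_swapM B, onSites_mul hst, h, onSites_smul, onSites_one hst]
  have hinv : (onSites t s B)⁻¹ = c⁻¹ • onSites s t A := Matrix.inv_eq_left_inv <| by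
    rw [smul_mul_assoc, hprod, smul_smul, inv_mul_cancel₀ hc, one_smul]
  rw [hinv, smul_smul, mul_inv_cancel₀ hc, one_smul]

end Unitarity

theorem stmt7_general (n N : ℕ) (R : ℂ → Sq n) (D : MatV n) (z : Fin N → ℂ)
    (hunit : ∀ x : ℂ, x ≠ 0 → ∃ c : ℂ, c ≠ 0 ∧ R x * swapM (R x⁻¹) = c • (1 : Sq n))
    (hreg : ∃ c : ℂ, c ≠ 0 ∧ R 1 = c • flipM n)
    (hz : ∀ i, z i ≠ 0) :
    ∀ i : Fin N, ∃ c : ℂ, c ≠ 0 ∧ Tper R D z (z i) = c • Aper R D z i := by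
  intro i
  obtain ⟨c₀, hc₀, hR1⟩ := hreg
  choose c hc hcR using fun k : Fin (N - (i.1 + 1)) =>
    hunit (z i / z ⟨i.1 + 1 + k.1, by omega⟩) (div_ne_zero (hz i) (hz _))
  refine ⟨c₀ * ∏ k, c k,
    mul_ne_zero hc₀ (Finset.prod_ne_zero_iff.mpr fun k _ => hc k), ?_⟩
  have hupper : (fun k : Fin (N - (i.1 + 1)) => siteJK i ⟨i.1 + 1 + k.1, by omega⟩
        (R (z i / z ⟨i.1 + 1 + k.1, by omega⟩)))
      = fun k => c k • (siteJK ⟨i.1 + 1 + k.1, by omega⟩ i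
        (R (z ⟨i.1 + 1 + k.1, by omega⟩ / z i)))⁻¹ := by
    funext k
    rw [siteJK_eq_onSites, siteJK_eq_onSites, onSites_eq_smul_inv _ (hc k)]
    · simpa only [inv_div] using hcR k
    · simp only [ne_eq, Fin.ext_iff]; omega
  rw [Tper_inhomogeneity_eq_smul hR1 D (hz i), hupper, pdesc_smul, mul_smul_comm, smul_smul, Aper]

/-- Gaudin's observation — interpolants of the inhomogeneous transfer matrix at the
inhomogeneities are proportional to the scattering (qKZ transport at `p = 1`) matrices. -/
theorem stmt7 (n N : ℕ) (R : ℂ → Sq n) (D : MatV n) (z : Fin N → ℂ)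
    (hRinv : ∀ x : ℂ, IsUnit (R x))
    (hYBE : YBEprop R)
    (hunit : ∀ x : ℂ, x ≠ 0 → ∃ c : ℂ, c ≠ 0 ∧ R x * swapM (R x⁻¹) = c • (1 : Sq n))
    (hreg : ∃ c : ℂ, c ≠ 0 ∧ R 1 = c • flipM n)
    (hD : IsUnit D)
    (hDD : ∀ x : ℂ, R x * (D ⊗ₖ D) = (D ⊗ₖ D) * R x)
    (hz : ∀ i, z i ≠ 0) :
    ∀ i : Fin N, ∃ c : ℂ, c ≠ 0 ∧ Tper R D z (z i) = c • Aper R D z i :=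
  stmt7_general n N R D z hunit hreg hz
end
end
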